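/- Let K ≥ 1, let W = (W_1,…,W_K) be an integrable, almost surely positive random vector, let ρ_1,…,ρ_K > 0, and let S_1,…,S_K be positive random variables, with (S_1,…,S_K) independent of W and b_k := E[S_k^{−ρ_k}] < ∞ for each k. Then for every x ∈ [0,∞)^K, E[max_{1≤k≤K} x_k W_k / (b_k S_k^{ρ_k})] ≥ E[max_{1≤k≤K} x_k W_k]. -/

import Mathlib

/-!
Conditionally on `W = w`, each coordinate `x k * w k / (b k * S k ^ ρ k)` has mean exactly
`x k * w k`, because `b k` is the mean of `S k ^ (-ρ k)` and `S` is independent of `W`. The mean of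
a maximum dominates the maximum of the means, so integrating over `w` gives the inequality.
-/

open MeasureTheory ProbabilityTheory
open scoped ENNReal

lemma ENNReal.ofReal_iSup_of_finite {ι : Type*} [Finite ι] (f : ι → ℝ) :
    ENNReal.ofReal (⨆ i, f i) = ⨆ i, ENNReal.ofReal (f i) := by
  cases isEmpty_or_nonempty ι
  · simp [Real.iSup_of_isEmpty]
  · exact ENNReal.ofReal_mono.map_ciSup_of_continuousAt
      ENNReal.continuous_ofReal.continuousAt (Finite.bddAbove_range f)

section

variable {Ω : Type*} [MeasurableSpace Ω] {μ : Measure Ω}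

lemma integral_pos_of_ae_pos [NeZero μ] {f : Ω → ℝ} (hf : ∀ᵐ ω ∂μ, 0 < f ω)
    (hfi : Integrable f μ) : 0 < ∫ ω, f ω ∂μ := by
  have hf₀ : 0 ≤ᵐ[μ] f := hf.mono fun _ h => h.le
  refine (integral_nonneg_of_ae hf₀).lt_of_ne' fun h => ?_
  obtain ⟨ω, hpos, hzero⟩ :=
    (hf.and ((integral_eq_zero_iff_of_nonneg_ae hf₀ hfi).1 h)).exists
  exact hpos.ne' hzero

lemma lintegral_ofReal_div_integral_rpow_neg_mul_rpow [NeZero μ] {f : Ω → ℝ} {r : ℝ}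
    (hf : ∀ᵐ ω ∂μ, 0 < f ω) (hfi : Integrable (fun ω => f ω ^ (-r)) μ) (c : ℝ) :
    ∫⁻ ω, ENNReal.ofReal (c / ((∫ ω', f ω' ^ (-r) ∂μ) * f ω ^ r)) ∂μ = ENNReal.ofReal c := by
  set b := ∫ ω', f ω' ^ (-r) ∂μ
  have hb : 0 < b := integral_pos_of_ae_pos (hf.mono fun _ h => Real.rpow_pos_of_pos h _) hfi
  calc ∫⁻ ω, ENNReal.ofReal (c / (b * f ω ^ r)) ∂μ
      = ∫⁻ ω, ENNReal.ofReal (c / b) * ENNReal.ofReal (f ω ^ (-r)) ∂μ := by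
        refine lintegral_congr_ae (hf.mono fun ω h => ?_)
        beta_reduce
        rw [← ENNReal.ofReal_mul' (Real.rpow_nonneg h.le _), Real.rpow_neg h.le,
          ← div_eq_mul_inv, div_mul_eq_div_div]
    _ = ENNReal.ofReal (c / b) * ENNReal.ofReal b := by
        rw [lintegral_const_mul' _ _ ENNReal.ofReal_ne_top,
          ← ofReal_integral_eq_lintegral_ofReal hfi (hf.mono fun _ h => Real.rpow_nonneg h.le _)]
    _ = ENNReal.ofReal c := by rw [← ENNReal.ofReal_mul' hb.le, div_mul_cancel₀ _ hb.ne']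

theorem ProbabilityTheory.IndepFun.lintegral_comp_eq_lintegral_lintegral [IsFiniteMeasure μ]
    {α β : Type*} [MeasurableSpace α] [MeasurableSpace β] {X : Ω → α} {Y : Ω → β}
    (hXY : IndepFun X Y μ) (hX : Measurable X) (hY : Measurable Y) {F : α × β → ℝ≥0∞}
    (hF : Measurable F) :
    ∫⁻ ω, F (X ω, Y ω) ∂μ = ∫⁻ ω₂, ∫⁻ ω₁, F (X ω₁, Y ω₂) ∂μ ∂μ :=
  calc ∫⁻ ω, F (X ω, Y ω) ∂μ
      = ∫⁻ p, F p ∂(μ.map fun ω => (X ω, Y ω)) := (lintegral_map hF (hX.prodMk hY)).symm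
    _ = ∫⁻ p, F p ∂((μ.map X).prod (μ.map Y)) := by
        rw [hXY.map_prod_eq_prod_map_map hX.aemeasurable hY.aemeasurable]
    _ = ∫⁻ y, ∫⁻ x, F (x, y) ∂(μ.map X) ∂(μ.map Y) := lintegral_prod_symm _ hF.aemeasurable
    _ = ∫⁻ ω₂, ∫⁻ ω₁, F (X ω₁, Y ω₂) ∂μ ∂μ := by
        rw [lintegral_map hF.lintegral_prod_left' hY]
        exact lintegral_congr fun y => lintegral_map (hF.comp measurable_prodMk_right) hX

end

theorem stmt_14_general
    {Ω : Type*} [MeasurableSpace Ω] (μ : Measure Ω) [IsProbabilityMeasure μ]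
    (K : ℕ)
    (W : Fin K → Ω → ℝ)
    (hWmeas : ∀ k, Measurable (W k))
    (ρ : Fin K → ℝ)
    (S : Fin K → Ω → ℝ)
    (hSmeas : ∀ k, Measurable (S k))
    (hSpos : ∀ k, ∀ᵐ ω ∂μ, 0 < S k ω)
    (hindep : IndepFun (fun ω k => S k ω) (fun ω k => W k ω) μ)
    (hSint : ∀ k, Integrable (fun ω => S k ω ^ (-(ρ k))) μ)
    (b : Fin K → ℝ) (hb : ∀ k, b k = ∫ ω, S k ω ^ (-(ρ k)) ∂μ) :
    ∀ x : Fin K → ℝ, (∀ k, 0 ≤ x k) →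
      ∫⁻ ω, ENNReal.ofReal (⨆ k, x k * W k ω) ∂μ ≤
        ∫⁻ ω, ENNReal.ofReal (⨆ k, x k * W k ω / (b k * S k ω ^ ρ k)) ∂μ := by
  intro x _
  obtain rfl : b = fun k => ∫ ω, S k ω ^ (-(ρ k)) ∂μ := funext hb
  have hF : Measurable fun p : (Fin K → ℝ) × (Fin K → ℝ) =>
      ⨆ k, ENNReal.ofReal (x k * p.2 k / ((∫ ω, S k ω ^ (-(ρ k)) ∂μ) * p.1 k ^ ρ k)) := by
    fun_prop
  calc ∫⁻ ω, ENNReal.ofReal (⨆ k, x k * W k ω) ∂μ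
      = ∫⁻ ω₂, ⨆ k, ∫⁻ ω₁, ENNReal.ofReal
          (x k * W k ω₂ / ((∫ ω, S k ω ^ (-(ρ k)) ∂μ) * S k ω₁ ^ ρ k)) ∂μ ∂μ := by
        simp_rw [ENNReal.ofReal_iSup_of_finite,
          lintegral_ofReal_div_integral_rpow_neg_mul_rpow (hSpos _) (hSint _)]
    _ ≤ ∫⁻ ω₂, ∫⁻ ω₁, ⨆ k, ENNReal.ofReal
          (x k * W k ω₂ / ((∫ ω, S k ω ^ (-(ρ k)) ∂μ) * S k ω₁ ^ ρ k)) ∂μ ∂μ :=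
        lintegral_mono fun _ => iSup_lintegral_le _
    _ = ∫⁻ ω, ⨆ k, ENNReal.ofReal
          (x k * W k ω / ((∫ ω, S k ω ^ (-(ρ k)) ∂μ) * S k ω ^ ρ k)) ∂μ :=
        (hindep.lintegral_comp_eq_lintegral_lintegral (measurable_pi_lambda _ hSmeas)
          (measurable_pi_lambda _ hWmeas) hF).symm
    _ = _ := by simp_rw [ENNReal.ofReal_iSup_of_finite]

/-- For an integrable, a.s. positive random vector `W`, exponents
`ρ k > 0` and positive random variables `S k` with `(S_1,…,S_K)` independent of `W` and
`b k = E[S k ^ (-ρ k)] < ∞`: for every coordinatewise nonnegative `x`,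
`E[max_k x k * W k / (b k * S k ^ ρ k)] ≥ E[max_k x k * W k]`
(expectations as Lebesgue integrals, possibly infinite). -/
theorem stmt_14
    {Ω : Type*} [MeasurableSpace Ω] (μ : Measure Ω) [IsProbabilityMeasure μ]
    (K : ℕ) (hK : 1 ≤ K)
    (W : Fin K → Ω → ℝ)
    (hWmeas : ∀ k, Measurable (W k))
    (hWint : ∀ k, Integrable (W k) μ)
    (hWpos : ∀ k, ∀ᵐ ω ∂μ, 0 < W k ω)
    (ρ : Fin K → ℝ) (hρ : ∀ k, 0 < ρ k)
    (S : Fin K → Ω → ℝ)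
    (hSmeas : ∀ k, Measurable (S k))
    (hSpos : ∀ k, ∀ᵐ ω ∂μ, 0 < S k ω)
    (hindep : IndepFun (fun ω k => S k ω) (fun ω k => W k ω) μ)
    (hSint : ∀ k, Integrable (fun ω => S k ω ^ (-(ρ k))) μ)
    (b : Fin K → ℝ) (hb : ∀ k, b k = ∫ ω, S k ω ^ (-(ρ k)) ∂μ) :
    ∀ x : Fin K → ℝ, (∀ k, 0 ≤ x k) →
      ∫⁻ ω, ENNReal.ofReal (⨆ k, x k * W k ω) ∂μ ≤
        ∫⁻ ω, ENNReal.ofReal (⨆ k, x k * W k ω / (b k * S k ω ^ ρ k)) ∂μ :=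
  stmt_14_general μ K W hWmeas ρ S hSmeas hSpos hindep hSint b hb
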